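/- arXiv:math/0403173 — 2 statements merged into one kernel-verified Lean document; each statement's English description precedes it below -/
import Mathlib

section
/- Let K be an algebraically closed field of characteristic 0, n ≥ 2, and let H ∈ K[Y,Z] be homogeneous with H not divisible by (aY − bZ) for a given point [b:a] ∈ P^1. For the curve C: X^n = α·H(Y,Z) (α ∈ K*) and two general lines ℓ_1, ℓ_2 through p = [1:0:0] each meeting C in n distinct points, there exist n lines L_1,...,L_n, each joining a point of C ∩ ℓ_1 to a point of C ∩ ℓ_2, such that L_1,...,L_n all pass through a common point lying on the line X = 0. -/
open Polynomial

/-!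
Multiplying the `X`-coordinate by `ζ ^ j` is a projective transformation fixing the line
`X = 0` pointwise, and it carries the line joining `[x₁ : y₁ : 1]` and `[x₂ : y₂ : 1]` to the
line `L_j`. Hence every `L_j` meets `X = 0` where `L_0` does, namely at
`[0 : x₁ y₂ - x₂ y₁ : x₁ - x₂]`.
-/

section

variable {R : Type*} [CommRing R]

/-- The point where the line joining `[x₁ : y₁ : 1]` and `[x₂ : y₂ : 1]` meets `X = 0`. -/
def lineMeetXEqZero (x₁ x₂ y₁ y₂ : R) : Fin 3 → R :=
  ![0, x₁ * y₂ - x₂ * y₁, x₁ - x₂]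

theorem det_lineMeetXEqZero (x₁ x₂ y₁ y₂ : R) :
    let q := lineMeetXEqZero x₁ x₂ y₁ y₂
    !![x₁, y₁, 1; x₂, y₂, 1; q 0, q 1, q 2].det = 0 := by
  simp only [lineMeetXEqZero, Matrix.det_fin_three, Matrix.of_apply, Matrix.cons_val',
    Matrix.cons_val_zero, Matrix.cons_val_one, Matrix.cons_val, Matrix.cons_val_fin_one]
  ring

theorem det_mul_col_zero_of_apply_zero (c a₁ a₂ b₁ b₂ : R) (q : Fin 3 → R)
    (hq : q 0 = 0) :
    !![c * a₁, b₁, 1; c * a₂, b₂, 1; q 0, q 1, q 2].det =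
      c * !![a₁, b₁, 1; a₂, b₂, 1; q 0, q 1, q 2].det := by
  simp only [hq, Matrix.det_fin_three, Matrix.of_apply, Matrix.cons_val', Matrix.cons_val_zero,
    Matrix.cons_val_one, Matrix.cons_val, Matrix.cons_val_fin_one]
  ring

theorem lineMeetXEqZero_ne_zero [NoZeroDivisors R] {x₁ x₂ y₁ y₂ : R} (hy : y₁ ≠ y₂)
    (hx₁ : x₁ ≠ 0) : lineMeetXEqZero x₁ x₂ y₁ y₂ ≠ 0 := by
  intro h
  have hx : x₁ = x₂ := sub_eq_zero.mp (congrFun h 2)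
  have hmul : x₁ * (y₂ - y₁) = 0 := by
    have h1 : x₁ * y₂ - x₂ * y₁ = 0 := congrFun h 1
    rw [← hx] at h1
    linear_combination h1
  exact hy (sub_eq_zero.mp ((mul_eq_zero.mp hmul).resolve_left hx₁)).symm

end

theorem joining_lines_concurrent_on_X_eq_zero_general
    (K : Type*) [Field K]
    (n : ℕ) (ζ : K)
    (y₁ y₂ x₁ x₂ : K) (hy : y₁ ≠ y₂)
    (hx₁0 : x₁ ≠ 0) :
    ∃ q : Fin 3 → K, q ≠ 0 ∧ q 0 = 0 ∧
      ∀ j : Fin n,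
        Matrix.det !![ζ ^ (j : ℕ) * x₁, y₁, 1;
                      ζ ^ (j : ℕ) * x₂, y₂, 1;
                      q 0, q 1, q 2] = 0 := by
  refine ⟨lineMeetXEqZero x₁ x₂ y₁ y₂, lineMeetXEqZero_ne_zero hy hx₁0, rfl, fun j => ?_⟩
  rw [det_mul_col_zero_of_apply_zero _ _ _ _ _ _ rfl, det_lineMeetXEqZero, mul_zero]

/-- On the curve `X^n = α·H(Y,Z)`, the points on the line `Y = yᵢZ` are
`[ζ^j·xᵢ : yᵢ : 1]` where `xᵢ^n = α·H(yᵢ,1)` and `ζ` is a primitive `n`-th root of unity.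
The `n` lines `L_j` joining `[ζ^j·x₁ : y₁ : 1]` to `[ζ^j·x₂ : y₂ : 1]` all pass through one
common point `q` lying on the line `X = 0` (collinearity expressed by a vanishing 3×3
determinant). -/
theorem joining_lines_concurrent_on_X_eq_zero
    (K : Type*) [Field K] [IsAlgClosed K] [CharZero K]
    (n : ℕ) (hn : 2 ≤ n) (ζ : K) (hζ : IsPrimitiveRoot ζ n)
    (H : K[X]) (α : K) (hα : α ≠ 0)
    (y₁ y₂ x₁ x₂ : K) (hy : y₁ ≠ y₂)
    (hx₁ : x₁ ^ n = α * H.eval y₁) (hx₂ : x₂ ^ n = α * H.eval y₂)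
    (hx₁0 : x₁ ≠ 0) (hx₂0 : x₂ ≠ 0) :
    ∃ q : Fin 3 → K, q ≠ 0 ∧ q 0 = 0 ∧
      ∀ j : Fin n,
        Matrix.det !![ζ ^ (j : ℕ) * x₁, y₁, 1;
                      ζ ^ (j : ℕ) * x₂, y₂, 1;
                      q 0, q 1, q 2] = 0 :=
  joining_lines_concurrent_on_X_eq_zero_general K n ζ y₁ y₂ x₁ x₂ hy hx₁0
end

section
/- Let K be a field of characteristic 0 and let G(X,Y) = X^d + Σ_{k=0}^{d-2} f_{d-k}(Y)·X^k with f_h ∈ K[Y]. Fix y₀ ∈ K and suppose G(x, y₀), as a polynomial in x, has d distinct roots x_1,...,x_d, and suppose there is a point (x̄, ȳ) ∈ K^2 lying on the tangent line to the curve G = 0 at each point (x_i, y₀), i.e., G_X(x_i,y₀)(x_i − x̄) + G_Y(x_i,y₀)(y₀ − ȳ) = 0 for all i. Then x̄ = 0. -/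
open MvPolynomial


lemma aux_eval {K : Type*} [CommRing K] (p : Polynomial K) (s : Fin 2 → K) :
    eval s (Polynomial.aeval (X 1 : MvPolynomial (Fin 2) K) p) = p.eval (s 1) := by
  induction p using Polynomial.induction_on' with
  | add p q hp hq => simp [hp, hq]
  | monomial n a => simp

lemma aux_pd0 {K : Type*} [CommRing K] (p : Polynomial K) :
    pderiv 0 (Polynomial.aeval (X 1 : MvPolynomial (Fin 2) K) p) = 0 := by
  induction p using Polynomial.induction_on' with
  | add p q hp hq => simp [hp, hq]
  | monomial n a => simp [pderiv_pow, pderiv_X_of_ne (by decide : (1:Fin 2) ≠ 0)]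

lemma aux_pd1 {K : Type*} [CommRing K] (p : Polynomial K) :
    pderiv 1 (Polynomial.aeval (X 1 : MvPolynomial (Fin 2) K) p) =
      Polynomial.aeval (X 1 : MvPolynomial (Fin 2) K) p.derivative := by
  induction p using Polynomial.induction_on' with
  | add p q hp hq => simp [hp, hq]
  | monomial n a =>
      simp [pderiv_pow, pderiv_X_self, Polynomial.derivative_monomial]
      ring

/-- Let `G(X,Y) = X^d + Σ_{k=0}^{d-2} f_{d-k}(Y)·X^k` (here `X = X 0`,
`Y = X 1`). If `G(x, y₀)` has `d` distinct roots `x₁,…,x_d` and a point `(x̄, ȳ)` lies on the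
tangent line of `G = 0` at each `(xᵢ, y₀)`, then `x̄ = 0`. -/
theorem xbar_eq_zero_of_concurrent_tangents
    (K : Type*) [Field K] [CharZero K]
    (d : ℕ) (hd : 2 ≤ d) (f : ℕ → Polynomial K)
    (G : MvPolynomial (Fin 2) K)
    (hG : G = X 0 ^ d + ∑ k ∈ Finset.range (d - 1),
        Polynomial.aeval (X 1 : MvPolynomial (Fin 2) K) (f k) * X 0 ^ k)
    (y₀ xbar ybar : K) (x : Fin d → K) (hinj : Function.Injective x)
    (hroot : ∀ i, eval ![x i, y₀] G = 0)
    (htang : ∀ i, eval ![x i, y₀] (pderiv 0 G) * (x i - xbar)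
        + eval ![x i, y₀] (pderiv 1 G) * (y₀ - ybar) = 0) :
    xbar = 0 := by
  obtain ⟨e, rfl⟩ : ∃ e, d = e + 2 := ⟨d - 2, by omega⟩
  set c : ℕ → K := fun k => (f k).eval y₀ with hc
  set c' : ℕ → K := fun k => ((f k).derivative).eval y₀ with hc'
  set g : Polynomial K := Polynomial.X ^ (e + 2)
      + ∑ k ∈ Finset.range (e + 1), Polynomial.C (c k) * Polynomial.X ^ k with hg
  set h : Polynomial K := ∑ k ∈ Finset.range (e + 1), Polynomial.C (c' k) * Polynomial.X ^ k
    with hh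
  -- evaluation facts
  have heg : ∀ t : K, g.eval t = eval ![t, y₀] G := by
    intro t
    simp [hg, hG, aux_eval, Polynomial.eval_finset_sum]
    rfl
  have hpd0 : ∀ t : K, eval ![t, y₀] (pderiv 0 G) = g.derivative.eval t := by
    intro t
    simp [hG, hg, aux_pd0, aux_eval, Derivation.leibniz, pderiv_pow, pderiv_X_self,
      Polynomial.derivative_sum, Polynomial.eval_finset_sum, Polynomial.derivative_X_pow]
    simp only [hc]; ring
  have hpd1 : ∀ t : K, eval ![t, y₀] (pderiv 1 G) = h.eval t := by
    intro t
    simp [hG, hh, aux_pd1, aux_eval, pderiv_pow,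
      pderiv_X_of_ne (by decide : (0:Fin 2) ≠ 1), Polynomial.eval_finset_sum]
    exact Finset.sum_congr rfl fun k _ => mul_comm _ _
  -- the auxiliary polynomial
  set P : Polynomial K := g.derivative * (Polynomial.X - Polynomial.C xbar)
      + h * Polynomial.C (y₀ - ybar) with hP
  set Q : Polynomial K := P - Polynomial.C ((e : K) + 2) * g with hQ
  -- coefficients of g and h
  have hgc : ∀ n, g.coeff n = (if n = e + 2 then 1 else 0) + (if n < e + 1 then c n else 0) := by
    intro n
    rw [hg, Polynomial.coeff_add, Polynomial.coeff_X_pow, Polynomial.finset_sum_coeff]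
    congr 1
    simp only [Polynomial.coeff_C_mul, Polynomial.coeff_X_pow, mul_ite, mul_one, mul_zero]
    rw [Finset.sum_ite_eq (Finset.range (e + 1)) n c]
    simp [Finset.mem_range]
  have hhc : ∀ n, h.coeff n = if n < e + 1 then c' n else 0 := by
    intro n
    rw [hh, Polynomial.finset_sum_coeff]
    simp only [Polynomial.coeff_C_mul, Polynomial.coeff_X_pow, mul_ite, mul_one, mul_zero]
    rw [Finset.sum_ite_eq (Finset.range (e + 1)) n c']
    simp [Finset.mem_range]
  -- Q vanishes at the d distinct points
  have hQeval : ∀ i, Q.eval (x i) = 0 := by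
    intro i
    have h1 := htang i
    rw [hpd0 (x i), hpd1 (x i)] at h1
    have h2 := hroot i
    rw [← heg (x i)] at h2
    simp [hQ, hP, h1, h2]
  -- high coefficients of Q vanish
  have hQdeg : ∀ m, e + 2 ≤ m → Q.coeff m = 0 := by
    intro m hm
    obtain ⟨m', rfl⟩ : ∃ m', m = m' + 1 := ⟨m - 1, by omega⟩
    have hd1 : g.derivative.coeff m' = g.coeff (m' + 1) * ((m' : K) + 1) :=
      Polynomial.coeff_derivative g m'
    have hd2 : g.derivative.coeff (m' + 1) = g.coeff (m' + 2) * ((m' : K) + 2) := by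
      have := Polynomial.coeff_derivative g (m' + 1)
      push_cast at this ⊢; linear_combination this
    simp only [hQ, hP, Polynomial.coeff_sub, Polynomial.coeff_add, Polynomial.coeff_mul_C,
      Polynomial.coeff_C_mul, mul_sub, Polynomial.coeff_mul_X, hd1, hd2]
    simp only [hgc, hhc]
    have h2 : ¬ (m' + 2 = e + 2) := by omega
    have h3 : ¬ (m' + 1 < e + 1) := by omega
    have h4 : ¬ (m' + 2 < e + 1) := by omega
    have h5 : (if m' + 1 < e + 1 then c' (m' + 1) else 0) = 0 := if_neg h3
    rw [h5, if_neg h2, if_neg h3, if_neg h4]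
    by_cases h1 : m' + 1 = e + 2
    · rw [if_pos h1]
      obtain rfl : m' = e + 1 := by omega
      push_cast; ring
    · rw [if_neg h1]; ring
  -- hence Q = 0
  have hQ0 : Q = 0 := by
    apply Polynomial.eq_zero_of_natDegree_lt_card_of_eval_eq_zero Q hinj hQeval
    rw [Fintype.card_fin]
    by_cases hz : Q = 0
    · rw [hz]; simp
    · refine (Polynomial.natDegree_lt_iff_degree_lt hz).mpr ?_
      rw [Polynomial.degree_lt_iff_coeff_zero]
      intro m hm
      exact hQdeg m (by exact_mod_cast hm)
  -- the coefficient of degree e+1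
  have hfin : Q.coeff (e + 1) = -((e : K) + 2) * xbar := by
    have hd1 : g.derivative.coeff e = g.coeff (e + 1) * ((e : K) + 1) :=
      Polynomial.coeff_derivative g e
    have hd2 : g.derivative.coeff (e + 1) = g.coeff (e + 2) * ((e : K) + 2) := by
      have := Polynomial.coeff_derivative g (e + 1)
      push_cast at this ⊢; linear_combination this
    simp only [hQ, hP, Polynomial.coeff_sub, Polynomial.coeff_add, Polynomial.coeff_mul_C,
      Polynomial.coeff_C_mul, mul_sub, Polynomial.coeff_mul_X, hd1, hd2]
    simp only [hgc, hhc]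
    have h1 : ¬ (e + 1 = e + 2) := by omega
    have h3 : ¬ (e + 1 < e + 1) := by omega
    have h4 : ¬ (e + 2 < e + 1) := by omega
    have h5 : (if e + 1 < e + 1 then c' (e + 1) else 0) = 0 := if_neg h3
    simp only [h5, if_true, if_neg h1, if_neg h3, if_neg h4]
    ring
  rw [hQ0, Polynomial.coeff_zero] at hfin
  have hne : ((e : K) + 2) ≠ 0 := by
    have : ((e : K) + 2) = ((e + 2 : ℕ) : K) := by push_cast; ring
    rw [this]
    exact Nat.cast_ne_zero.mpr (by omega)
  have := hfin.symm
  rw [neg_mul, neg_eq_zero, mul_eq_zero] at this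
  rcases this with h' | h'
  · exact absurd h' hne
  · exact h'
end
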